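/- Let S be a commutative periodic semigroup and R a commutative unitary ring. Suppose that St(e) ⊆ E(S) for every idempotent e ∈ E(S). Then I(S) ≤ d(S,R) + 1, where I(S) is the Erdős–Burgess constant of S. -/

import Mathlib

/-!
Let `s_1, …, s_ℓ` be idempotent-sum free and expand `∏ (X^{s_i} - a_i X^{e(s_i)})` over the
subsets `t` of indices where `X^{s_i}` is chosen. The monomial `X^{s_1 + ⋯ + s_ℓ}` arises for
`t = everything`, with coefficient `1`, and for no other `t`: if
`Σ_{i∈t} s_i + Σ_{i∉t} e(s_i) = Σ_{i∈t} s_i + Σ_{i∉t} s_i`, then `Σ_{i∉t} s_i` stabilizes the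
idempotent `k Σ_{i∈t} s_i + Σ_{i∉t} e(s_i)` (for `k` making the first summand idempotent), hence
is itself idempotent. So the product is nonzero and `ℓ ≤ d(S,R)`. Sums are taken in `S ∪ {0}`
so that `t` may be empty.
-/

namespace ZS

variable (S : Type*) [AddCommSemigroup S]

/-- `nsmul' n x = (n+1)·x`, iterated addition in a semigroup. -/
def nsmul' : ℕ → S → S
  | 0, x => x
  | n + 1, x => x + nsmul' n x

/-- The cyclic subsemigroup `⟨x⟩ = {x, 2x, 3x, …}` generated by `x`. -/
def cyc (x : S) : Set S := Set.range fun n => nsmul' S n x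

/-- `x` is periodic if `⟨x⟩` is finite. -/
def IsPeriodicElem (x : S) : Prop := (cyc S x).Finite

/-- A semigroup is periodic if every element is periodic. -/
def IsPeriodicSemigroup : Prop := ∀ x : S, IsPeriodicElem S x

/-- `ρ(x)`: the least `m ≥ 1` such that `m·x` is idempotent (equivalently `m·x = e(x)`). -/
noncomputable def rho (x : S) : ℕ :=
  sInf {n : ℕ | nsmul' S n x + nsmul' S n x = nsmul' S n x} + 1

/-- `e(x)`: the unique idempotent of the finite cyclic semigroup `⟨x⟩`. -/
noncomputable def eIdem (x : S) : S :=
  nsmul' S (sInf {n : ℕ | nsmul' S n x + nsmul' S n x = nsmul' S n x}) x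

/-- The period of a (periodic) element `x`: the least `n > 0` with `(m+n)x = mx` for some `m`. -/
noncomputable def period (x : S) : ℕ :=
  sInf {n : ℕ | 0 < n ∧ ∃ m : ℕ, nsmul' S (m + n) x = nsmul' S m x}

/-- The index of a (periodic) element `x`: the least `k ≥ 1` with `kx = tx` for some `t ≠ k`. -/
noncomputable def indexOf (x : S) : ℕ :=
  sInf {k : ℕ | ∃ t : ℕ, t ≠ k ∧ nsmul' S k x = nsmul' S t x} + 1

/-- `exp(S)`: the lcm of the periods of the elements of `S`, described as the least positive
common multiple of all the periods. -/
noncomputable def expS : ℕ := sInf {n : ℕ | 0 < n ∧ ∀ x : S, period S x ∣ n}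

/-- `K` is a splitting field for exponent `n`: it contains exactly `n` `n`-th roots of unity. -/
def SplitField (K : Type*) [Field K] (n : ℕ) : Prop := Set.ncard {ζ : K | ζ ^ n = 1} = n

/-- Green's preorder `a ≼_𝓗 b`. -/
def gLe (a b : S) : Prop := a = b ∨ ∃ c : S, a = b + c

/-- Green's congruence `a 𝓗 b`. -/
def gEq (a b : S) : Prop := gLe S a b ∧ gLe S b a

/-- `a ≺_𝓗 b`. -/
def gLt (a b : S) : Prop := gLe S a b ∧ ¬ gLe S b a

/-- The Green class `H_a`. -/
def HClass (a : S) : Set S := {x : S | gEq S x a}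

/-- The stabilizer `St(H_a)` of the Green class of `a`. -/
def stab (a : S) : Set S := {c : S | ∀ x ∈ HClass S a, c + x ∈ HClass S a}

theorem gLe_trans {a b c : S} (h1 : gLe S a b) (h2 : gLe S b c) : gLe S a c := by
  rcases h1 with rfl | ⟨u, rfl⟩
  · exact h2
  · rcases h2 with rfl | ⟨v, rfl⟩
    · exact Or.inr ⟨u, rfl⟩
    · exact Or.inr ⟨v + u, by rw [add_assoc]⟩

theorem gLe_add_right {a b : S} (x : S) (h : gLe S a b) : gLe S (a + x) (b + x) := by
  rcases h with rfl | ⟨c, rfl⟩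
  · exact Or.inl rfl
  · exact Or.inr ⟨c, by rw [add_right_comm]⟩

theorem gEq_add {w x y z : S} (h1 : gEq S w x) (h2 : gEq S y z) : gEq S (w + y) (x + z) := by
  have k1 : gLe S (w + y) (x + y) := gLe_add_right S y h1.1
  have k2 : gLe S (x + y) (x + z) := by
    have h := gLe_add_right S x h2.1
    rwa [add_comm z x, add_comm y x] at h
  have k3 : gLe S (x + z) (w + z) := gLe_add_right S z h1.2
  have k4 : gLe S (w + z) (w + y) := by
    have h := gLe_add_right S w h2.2
    rwa [add_comm z w, add_comm y w] at h
  exact ⟨gLe_trans S k1 k2, gLe_trans S k3 k4⟩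

/-- Green's congruence as an additive congruence. -/
def greenCon : AddCon S where
  r a b := gEq S a b
  iseqv := ⟨fun _ => ⟨Or.inl rfl, Or.inl rfl⟩, fun h => ⟨h.2, h.1⟩,
    fun h1 h2 => ⟨gLe_trans S h1.1 h2.1, gLe_trans S h2.2 h1.2⟩⟩
  add' h1 h2 := gEq_add S h1 h2

/-- The quotient semigroup `S/𝓗`. -/
abbrev GQuot := (greenCon S).Quotient

/-- The canonical epimorphism `S → S/𝓗`, `a ↦ ā`. -/
def gq (a : S) : GQuot S := (a : (greenCon S).Quotient)

/-- The sum of a sequence (multiset) of elements of `S`, computed in `WithZero S`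
(the empty sequence having sum the adjoined zero). -/
def msum (T : Multiset S) : WithZero S := (T.map fun x => (x : WithZero S)).sum

/-- A sequence over a commutative semigroup is (additively) reducible if some proper
(possibly empty) subsequence has the same sum; the empty sequence has sum the identity of `S`,
when `S` has one. -/
def IsReducible (T : Multiset S) : Prop :=
  (∃ T' : Multiset S, T' ≤ T ∧ T' ≠ T ∧ T' ≠ 0 ∧ msum S T' = msum S T) ∨
    (T ≠ 0 ∧ ∃ z : S, msum S T = ↑z ∧ ∀ s : S, z + s = s)

/-- The Davenport constant `D(S)` of a commutative semigroup. -/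
noncomputable def Dav : ℕ∞ :=
  sInf {n : ℕ∞ | ∀ T : Multiset S, (T.card : ℕ∞) ≥ n → IsReducible S T}

/-- The relative Davenport constant `D_a(S)`: the largest length of an additively
irreducible sequence with sum `a`. -/
noncomputable def Drel (a : S) : ℕ∞ :=
  sSup {n : ℕ∞ | ∃ T : Multiset S,
    T ≠ 0 ∧ ¬ IsReducible S T ∧ msum S T = ↑a ∧ n = (T.card : ℕ∞)}

/-- The Erdős–Burgess constant `I(S)`: the smallest `ℓ` such that every sequence over `S` of
length (at least) `ℓ` has a nonempty subsequence with idempotent sum. -/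
noncomputable def EB : ℕ∞ :=
  sInf {n : ℕ∞ | ∀ T : Multiset S, (T.card : ℕ∞) ≥ n →
    ∃ T' : Multiset S, T' ≤ T ∧ T' ≠ 0 ∧ ∃ x : S, msum S T' = ↑x ∧ x + x = x}

/-- The Davenport constant of a (semigroup which is a) group: the smallest `ℓ` such that every
sequence of length (at least) `ℓ` has a nonempty subsequence whose sum is the identity element. -/
noncomputable def DavGrpSet : ℕ∞ :=
  sInf {n : ℕ∞ | ∀ T : Multiset S, (T.card : ℕ∞) ≥ n →
    ∃ T' : Multiset S, T' ≤ T ∧ T' ≠ 0 ∧ ∃ z : S, msum S T' = ↑z ∧ ∀ x : S, z + x = x}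

/-- The Davenport constant of a finite abelian group. -/
noncomputable def DavG (G : Type*) [AddCommMonoid G] : ℕ∞ :=
  sInf {n : ℕ∞ | ∀ T : Multiset G, (T.card : ℕ∞) ≥ n →
    ∃ T' : Multiset G, T' ≤ T ∧ T' ≠ 0 ∧ T'.sum = 0}

/-- `ψ(a)`: the largest length of a strictly ascending chain of principal ideals starting at
`(a)`. -/
noncomputable def psi (a : S) : ℕ∞ :=
  sSup {n : ℕ∞ | ∃ ℓ : ℕ, n = (ℓ : ℕ∞) ∧
    ∃ c : ℕ → S, c 0 = a ∧ ∀ i < ℓ, gLt S (c i) (c (i + 1))}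

/-- `Ψ(S)`: the largest length of a strictly ascending chain of principal ideals of `S`. -/
noncomputable def PsiS : ℕ∞ := ⨆ a : S, psi S a

/-- A subset of a semigroup which is a subgroup: closed under addition, with an identity
and inverses. -/
def IsSubgroupSet (T : Set S) : Prop :=
  (∀ x ∈ T, ∀ y ∈ T, x + y ∈ T) ∧
    ∃ z ∈ T, (∀ x ∈ T, z + x = x) ∧ ∀ x ∈ T, ∃ y ∈ T, x + y = z

open Classical in
/-- `ε_a`: `0` if `⟨a⟩` is a group, `1` otherwise. -/
noncomputable def eps (a : S) : ℕ∞ := if IsSubgroupSet S (cyc S a) then 0 else 1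

/-- The Schützenberger maps on the Green class `H_a`: maps `x ↦ c + x` for `c ∈ St(H_a)`. -/
def GammaSet (a : S) : Set (↥(HClass S a) → ↥(HClass S a)) :=
  {f | ∃ c ∈ stab S a, ∀ x : ↥(HClass S a), (↑(f x) : S) = c + ↑x}

/-- The Schützenberger group `Γ(H_a)` (as a type; it is empty when `St(H_a) = ∅`). -/
def Gamma (a : S) : Type _ := ↥(GammaSet S a)

instance (a : S) : Add (Gamma S a) :=
  ⟨fun f g => ⟨f.1 ∘ g.1, by
    obtain ⟨c, hc, hfc⟩ := f.2
    obtain ⟨d, hd, hgd⟩ := g.2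
    refine ⟨c + d, fun x hx => by rw [add_assoc]; exact hc _ (hd x hx), fun x => ?_⟩
    show (↑(f.1 (g.1 x)) : S) = c + d + ↑x
    rw [hfc (g.1 x), hgd x, add_assoc]⟩⟩

instance (a : S) : AddCommSemigroup (Gamma S a) where
  add_assoc f g h := Subtype.ext rfl
  add_comm f g := by
    obtain ⟨c, hc, hfc⟩ := f.2
    obtain ⟨d, hd, hgd⟩ := g.2
    apply Subtype.ext
    funext x
    apply Subtype.ext
    show (↑(f.1 (g.1 x)) : S) = ↑(g.1 (f.1 x))
    rw [hfc (g.1 x), hgd x, hgd (f.1 x), hfc x, add_left_comm]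

/-- `St(H_a)` as a subsemigroup of `S`. -/
def stabSub (a : S) : AddSubsemigroup S where
  carrier := stab S a
  add_mem' := fun {c d} hc hd x hx => by rw [add_assoc]; exact hc _ (hd x hx)

/-- The canonical surjection `π_a : St(H_a) → Γ(H_a)`, `c ↦ γ_c`. -/
def gammaMap (a : S) (c : ↥(stabSub S a)) : Gamma S a :=
  ⟨fun x => ⟨(↑c : S) + ↑x, c.2 ↑x x.2⟩, ⟨↑c, c.2, fun _ => rfl⟩⟩

/-- The semigroup algebra `R[X;S]` of a commutative semigroup, realized inside the monoid
algebra of the monoid obtained from `S` by adjoining an identity element. -/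
abbrev SAlg (R : Type*) [CommRing R] (S : Type*) [AddCommSemigroup S] :=
  AddMonoidAlgebra R (WithZero S)

/-- The monomial `r·X^s` of the semigroup algebra. -/
noncomputable def Xm (R : Type*) [CommRing R] {S : Type*} [AddCommSemigroup S] (s : S) (r : R) :
    SAlg R S := AddMonoidAlgebra.single (↑s) r

/-- The factor `X^s - a·X^{e(s)}` of the semigroup algebra. -/
noncomputable def facX (R : Type*) [CommRing R] {S : Type*} [AddCommSemigroup S]
    (s : S) (a : R) : SAlg R S := Xm R s 1 - Xm R (eIdem S s) a

/-- The invariant `d(S,R)`: the supremum of all `ℓ` such that some sequence `s_1,…,s_ℓ` over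
`S` satisfies `(X^{s_1} - a_1 X^{e(s_1)}) ⋯ (X^{s_ℓ} - a_ℓ X^{e(s_ℓ)}) ≠ 0` in `R[X;S]` for all
nonzero `a_1, …, a_ℓ ∈ R`. -/
noncomputable def dd (R : Type*) [CommRing R] (S : Type*) [AddCommSemigroup S] : ℕ∞ :=
  sSup {n : ℕ∞ | ∃ ℓ : ℕ, n = (ℓ : ℕ∞) ∧ ∃ s : Fin ℓ → S,
    ∀ a : Fin ℓ → R, (∀ i, a i ≠ 0) → ∏ i, facX R (s i) (a i) ≠ 0}

/-- `Λ(S)`: the minimum over all generating sets `A` of `S` of `1 + Σ_{a∈A} (ρ(a)-1)`. -/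
noncomputable def Lam (S : Type*) [AddCommSemigroup S] : ℕ :=
  sInf {n : ℕ | ∃ A : Finset S,
    AddSubsemigroup.closure (↑A : Set S) = ⊤ ∧ n = 1 + ∑ a ∈ A, (rho S a - 1)}

/-- An elementary semigroup: an ideal extension of a nilsemigroup `N` by a group with zero
`G ∪ {∞}`. -/
def IsElementary : Prop :=
  ∃ G N : Set S, G ∪ N = Set.univ ∧ Disjoint G N ∧ IsSubgroupSet S G ∧
    (∀ x ∈ N, ∀ s : S, s + x ∈ N) ∧
    ∃ z ∈ N, (∀ s : S, s + z = z) ∧ ∀ x ∈ N, ∃ n : ℕ, nsmul' S n x = z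

theorem exists_pos_nsmul_add_self_of_finite_range {M : Type*} [AddMonoid M] {y : M}
    (hy : (Set.range fun n : ℕ => n • y).Finite) : ∃ n, 0 < n ∧ n • y + n • y = n • y := by
  obtain ⟨m, m', hlt, heq⟩ :=
    hy.exists_lt_map_eq_of_forall_mem (f := fun n : ℕ => n • y) fun n => Set.mem_range_self n
  have hshift : ∀ p, m ≤ p → (p + (m' - m)) • y = p • y := fun p hp => by
    rw [show p + (m' - m) = p - m + m' by omega, add_nsmul, ← heq, ← add_nsmul,
      Nat.sub_add_cancel hp]
  have hiter : ∀ j p, m ≤ p → (p + j * (m' - m)) • y = p • y := by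
    intro j
    induction j with
    | zero => simp
    | succ j ih =>
      intro p hp
      rw [add_one_mul, ← add_assoc, hshift _ (Nat.le_add_right_of_le hp), ih p hp]
  have hk : 0 < m' - m := by omega
  refine ⟨(m + 1) * (m' - m), Nat.mul_pos m.succ_pos hk, ?_⟩
  rw [← add_nsmul, hiter (m + 1) _ ((Nat.le_succ m).trans (Nat.le_mul_of_pos_right _ hk))]

theorem add_self_eq_of_add_eq_add {M : Type*} [AddCommMonoid M]
    (hst : ∀ e : M, e + e = e → ∀ c : M, c + e = e → c + c = c)
    {w f v : M} {k : ℕ} (hk : 0 < k) (hw : k • w + k • w = k • w) (hf : f + f = f)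
    (h : w + f = w + v) : v + v = v := by
  obtain ⟨j, rfl⟩ : ∃ j, k = j + 1 := ⟨k - 1, by omega⟩
  have hkwf : (j + 1) • w + f = (j + 1) • w + v := by
    rw [succ_nsmul, add_assoc, h, ← add_assoc]
  -- `v` stabilizes the idempotent `k • w + f`.
  refine hst ((j + 1) • w + f) (by rw [add_add_add_comm, hw, hf]) v ?_
  rw [← add_assoc, add_comm v, ← hkwf, add_assoc, hf]

theorem coeff_prod_single_add_single {ι R M : Type*} [Fintype ι] [DecidableEq ι]
    [CommSemiring R] [AddCommMonoid M] (x y : ι → M) (b : ι → R)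
    (hxy : ∀ t : Finset ι, t ≠ Finset.univ → ∑ i ∈ t, x i + ∑ i ∈ tᶜ, y i ≠ ∑ i, x i) :
    (∏ i, (AddMonoidAlgebra.single (x i) 1 + AddMonoidAlgebra.single (y i) (b i))).coeff
      (∑ i, x i) = 1 := by
  simp only [Finset.prod_add, AddMonoidAlgebra.prod_single, AddMonoidAlgebra.single_mul_single,
    ← Finset.compl_eq_univ_sdiff, AddMonoidAlgebra.coeff_sum, Finsupp.finsetSum_apply,
    AddMonoidAlgebra.coeff_single]
  rw [Finset.sum_eq_single_of_mem Finset.univ (Finset.mem_powerset_self _)]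
  · simp
  · exact fun t _ ht => Finsupp.single_eq_of_ne' (hxy t ht)

def IsIdemSumFree (T : Multiset S) : Prop :=
  ∀ T' ≤ T, T' ≠ 0 → ∀ x : S, msum S T' = ↑x → x + x ≠ x

section

variable {S}

theorem coe_nsmul' (x : S) (n : ℕ) :
    ((nsmul' S n x : S) : WithZero S) = (n + 1) • (x : WithZero S) := by
  induction n with
  | zero => simp [nsmul']
  | succ n ih => rw [nsmul', WithZero.coe_add, ih, succ_nsmul' _ (n + 1)]

theorem finite_range_nsmul_coe {x : S} (hx : IsPeriodicElem S x) :
    (Set.range fun n : ℕ => n • (x : WithZero S)).Finite := by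
  refine ((hx.image (↑)).insert 0).subset ?_
  rintro _ ⟨_ | n, rfl⟩
  · simp
  · exact Or.inr ⟨_, ⟨n, rfl⟩, coe_nsmul' x n⟩

theorem finite_range_nsmul_withZero (hper : IsPeriodicSemigroup S) (c : WithZero S) :
    (Set.range fun n : ℕ => n • c).Finite := by
  induction c using WithZero.recZeroCoe with
  | zero => simp
  | coe x => exact finite_range_nsmul_coe (hper x)

theorem eIdem_add_self {x : S} (hx : IsPeriodicElem S x) :
    eIdem S x + eIdem S x = eIdem S x := by
  obtain ⟨_ | n, hpos, hn⟩ := exists_pos_nsmul_add_self_of_finite_range (finite_range_nsmul_coe hx)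
  · exact absurd hpos (lt_irrefl 0)
  · rw [← coe_nsmul', ← WithZero.coe_add, WithZero.coe_inj] at hn
    have hne : {m | nsmul' S m x + nsmul' S m x = nsmul' S m x}.Nonempty := ⟨n, hn⟩
    exact Nat.sInf_mem hne

theorem withZero_stab_idem (hst : ∀ e : S, e + e = e → ∀ c : S, c + e = e → c + c = c) :
    ∀ e : WithZero S, e + e = e → ∀ c : WithZero S, c + e = e → c + c = c := by
  intro e he c hc
  induction c using WithZero.recZeroCoe with
  | zero => simp
  | coe c =>
    induction e using WithZero.recZeroCoe with
    | zero => simp at hc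
    | coe e =>
      norm_cast at he hc ⊢
      exact hst e he c hc

theorem facX_eq_single_add_single (R : Type*) [CommRing R] (s : S) (a : R) :
    facX R s a = AddMonoidAlgebra.single (s : WithZero S) 1 +
      AddMonoidAlgebra.single (eIdem S s : WithZero S) (-a) := by
  rw [facX, Xm, Xm, sub_eq_add_neg, AddMonoidAlgebra.single_neg]

theorem prod_facX_ne_zero {R ι : Type*} [CommRing R] [Nontrivial R] [Fintype ι] [DecidableEq ι]
    (hper : IsPeriodicSemigroup S)
    (hst : ∀ e : S, e + e = e → ∀ c : S, c + e = e → c + c = c) (s : ι → S)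
    (hfree : ∀ t : Finset ι, t.Nonempty →
      ∑ i ∈ t, (s i : WithZero S) + ∑ i ∈ t, (s i : WithZero S) ≠ ∑ i ∈ t, (s i : WithZero S))
    (a : ι → R) : ∏ i, facX R (s i) (a i) ≠ 0 := by
  intro h0
  have hcoeff := coeff_prod_single_add_single (fun i => (s i : WithZero S))
    (fun i => (eIdem S (s i) : WithZero S)) (fun i => -a i) ?_
  · simp only [← facX_eq_single_add_single, h0] at hcoeff
    simp at hcoeff
  · intro t ht hcol
    refine hfree tᶜ ((Finset.compl_ne_univ_iff_nonempty tᶜ).mp (by simpa using ht)) ?_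
    obtain ⟨k, hk, hw⟩ := exists_pos_nsmul_add_self_of_finite_range
      (finite_range_nsmul_withZero hper (∑ i ∈ t, (s i : WithZero S)))
    refine add_self_eq_of_add_eq_add (withZero_stab_idem hst) hk hw ?_
      (hcol.trans (Finset.sum_add_sum_compl t _).symm)
    rw [← Finset.sum_add_distrib]
    exact Finset.sum_congr rfl fun i _ => by exact_mod_cast eIdem_add_self (hper (s i))

theorem msum_map {ι : Type*} (s : ι → S) (t : Finset ι) :
    msum S (t.val.map s) = ∑ i ∈ t, (s i : WithZero S) := by
  -- the coercion in `msum` elaborates through the `Multiset` monad, as `T >>= pure ∘ (↑)`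
  simp only [msum, Multiset.map_id']
  show ((t.val.map s).bind fun a => {(a : WithZero S)}).sum = _
  rw [Multiset.bind_singleton, Multiset.map_map]
  rfl

theorem exists_coe_eq_sum {ι : Type*} (s : ι → S) {t : Finset ι} (ht : t.Nonempty) :
    ∃ x : S, ∑ i ∈ t, (s i : WithZero S) = x := by
  induction ht using Finset.Nonempty.cons_induction with
  | singleton i => exact ⟨s i, by simp⟩
  | cons i t hi _ ih =>
    obtain ⟨x, hx⟩ := ih
    exact ⟨s i + x, by rw [Finset.sum_cons, hx, WithZero.coe_add]⟩

theorem IsIdemSumFree.sum_add_self_ne {ι : Type*} [Fintype ι] {s : ι → S}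
    (hs : IsIdemSumFree S (Finset.univ.val.map s)) {t : Finset ι} (ht : t.Nonempty) :
    ∑ i ∈ t, (s i : WithZero S) + ∑ i ∈ t, (s i : WithZero S) ≠ ∑ i ∈ t, (s i : WithZero S) := by
  obtain ⟨x, hx⟩ := exists_coe_eq_sum s ht
  rw [hx]
  exact_mod_cast hs _ (Multiset.map_le_map (Finset.val_le_iff.2 t.subset_univ))
    (by simpa using ht.ne_empty) x (by rw [msum_map, hx])

theorem card_le_dd_of_isIdemSumFree (R : Type*) [CommRing R] (hper : IsPeriodicSemigroup S)
    (hst : ∀ e : S, e + e = e → ∀ c : S, c + e = e → c + c = c) {T : Multiset S}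
    (hT : IsIdemSumFree S T) : (T.card : ℕ∞) ≤ dd R S := by
  obtain rfl | ⟨y, hy⟩ := T.empty_or_exists_mem
  · simp
  have hT' : Finset.univ.val.map T.toList.get = T := by
    rw [Fin.univ_val_map, List.ofFn_get, Multiset.coe_toList]
  rw [← hT'] at hT
  rw [← Multiset.length_toList]
  refine le_sSup ⟨_, rfl, T.toList.get, fun a ha => ?_⟩
  have : Nontrivial R :=
    nontrivial_of_ne _ _ (ha ⟨0, List.length_pos_of_mem (Multiset.mem_toList.2 hy)⟩)
  exact prod_facX_ne_zero hper hst _ (fun t ht => hT.sum_add_self_ne ht) a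

end

/-- `I(S) ≤ d(S,R) + 1` when stabilizers of idempotents consist of
idempotents. -/
theorem stmt10 (S : Type*) [AddCommSemigroup S] (hper : IsPeriodicSemigroup S)
    (R : Type*) [CommRing R]
    (hst : ∀ e : S, e + e = e → ∀ c : S, c + e = e → c + c = c) :
    EB S ≤ dd R S + 1 := by
  refine sInf_le fun T hT => ?_
  by_contra! hfree
  have hcard := card_le_dd_of_isIdemSumFree R hper hst hfree
  have hlt : (T.card : ℕ∞) + 1 ≤ T.card := (add_le_add_left hcard 1).trans hT
  norm_cast at hlt
  omega

end ZS
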